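/- arXiv:math/9910150 — 4 statements merged into one kernel-verified Lean document; each statement's English description precedes it below -/
import Mathlib

section
/- Let X be a finite connected simplicial complex and δ a cellular perversity. The family B(X,δ) = {U(Δ,δ) : Δ a simplex of X} of perverse stars covers X and is a base for a topology on X; moreover for any two simplices Δ, Δ′ one has U(Δ,δ) ∩ U(Δ′,δ) = ⋃ {U(Δ″,δ) : Δ″ ≤ Δ and Δ″ ≤ Δ′ in Λ(X,δ)} (Lemma 2.3.3). -/
open CategoryTheory TopologicalSpace

/-- An abstract finite simplicial complex on a finite vertex type `V`. -/
structure SComplex (V : Type) [Fintype V] [DecidableEq V] where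
  faces : Finset (Finset V)
  nonempty_of_mem : ∀ s ∈ faces, s.Nonempty
  down_closed : ∀ s ∈ faces, ∀ t, t ⊆ s → t.Nonempty → t ∈ faces

namespace SComplex

variable {V : Type} [Fintype V] [DecidableEq V]

/-- The dimension of a simplex. -/
def dime (Δ : Finset V) : ℕ := Δ.card - 1

/-- Two simplices are incident if one is a face of the other. -/
def Incident (Δ Δ' : Finset V) : Prop := Δ ⊆ Δ' ∨ Δ' ⊆ Δ

/-- Connectivity of the complex. -/
def Connected (K : SComplex V) : Prop :=
  ∀ Δ ∈ K.faces, ∀ Δ' ∈ K.faces,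
    Relation.ReflTransGen (fun s t => s ∈ K.faces ∧ t ∈ K.faces ∧ (s ∩ t).Nonempty) Δ Δ'

/-- The open geometric simplex spanned by the vertex set `Δ`, inside `ℝ^V`. -/
def openSimplex (Δ : Finset V) : Set (V → ℝ) :=
  {x | (∀ v ∈ Δ, 0 < x v) ∧ (∀ v ∉ Δ, x v = 0) ∧ ∑ v ∈ Δ, x v = 1}

/-- The geometric realization of the complex, as a subset of `ℝ^V`. -/
def space (K : SComplex V) : Set (V → ℝ) :=
  ⋃ Δ ∈ K.faces, openSimplex Δ

/-- One step of the order of `Λ(X,δ)`: incident simplices whose perversities differ by one. -/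
def StepRel (K : SComplex V) (w : Finset V → ℤ) (Δ Δ' : Finset V) : Prop :=
  Δ ∈ K.faces ∧ Δ' ∈ K.faces ∧ Incident Δ Δ' ∧ w Δ = w Δ' + 1

/-- `Δ ≥ Δ'` in the poset `Λ(X,δ)`. -/
def lamGE (K : SComplex V) (w : Finset V → ℤ) (Δ Δ' : Finset V) : Prop :=
  Relation.ReflTransGen (StepRel K w) Δ Δ'

/-- The underlying set of the realization of `X` (to be equipped with the perverse topology). -/
def PSp (K : SComplex V) (_w : Finset V → ℤ) : Type := {x : V → ℝ // x ∈ space K}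

/-- The perverse star `U(Δ,δ)` of a simplex `Δ`: the union of the open simplices
`Δ' ≤ Δ` in `Λ(X,δ)`. -/
def pervStarP (K : SComplex V) (w : Finset V → ℤ) (Δ : Finset V) : Set (PSp K w) :=
  {x | ∃ Δ', lamGE K w Δ Δ' ∧ x.1 ∈ openSimplex Δ'}

/-- The family `B(X,δ)` of all perverse stars. -/
def pervBaseP (K : SComplex V) (w : Finset V → ℤ) : Set (Set (PSp K w)) :=
  {A | ∃ Δ ∈ K.faces, A = pervStarP K w Δ}

/-- The `δ`-perverse topology on `X`, generated by the perverse stars. -/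
instance (K : SComplex V) (w : Finset V → ℤ) : TopologicalSpace (PSp K w) :=
  TopologicalSpace.generateFrom (pervBaseP K w)

end SComplex

open SComplex

/-- A cellular perversity. -/
structure CellPerversity where
  d : ℕ → ℤ
  zero : d 0 = 0
  step : ∀ k : ℕ, 1 ≤ k →
    ((∀ i < k, d i < d k) ∧ (∃ i < k, d k = d i + 1)) ∨
    ((∀ i < k, d k < d i) ∧ (∃ i < k, d k = d i - 1))

lemma openSimplex_unique {V : Type} [DecidableEq V] {x : V → ℝ} {Δ₁ Δ₂ : Finset V}
    (h1 : x ∈ openSimplex Δ₁) (h2 : x ∈ openSimplex Δ₂) : Δ₁ = Δ₂ := by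
  ext v
  constructor
  · intro hv
    by_contra hv2
    have a := h2.2.1 v hv2
    have b := h1.1 v hv
    linarith
  · intro hv
    by_contra hv1
    have a := h1.2.1 v hv1
    have b := h2.1 v hv
    linarith

lemma lamGE_mem {V : Type} [Fintype V] [DecidableEq V] {K : SComplex V}
    {w : Finset V → ℤ} {Δ Δ' : Finset V}
    (h : lamGE K w Δ Δ') (hΔ : Δ ∈ K.faces) : Δ' ∈ K.faces := by
  induction h with
  | refl => exact hΔ
  | tail _ hstep _ => exact hstep.2.1

lemma pervStarP_mono {V : Type} [Fintype V] [DecidableEq V] {K : SComplex V}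
    {w : Finset V → ℤ} {Δ Δ' : Finset V}
    (h : lamGE K w Δ Δ') : pervStarP K w Δ' ⊆ pervStarP K w Δ := by
  rintro x ⟨Δ₃, h3, hx⟩
  exact ⟨Δ₃, h.trans h3, hx⟩

lemma pervStar_inter {V : Type} [Fintype V] [DecidableEq V]
    (K : SComplex V) (w : Finset V → ℤ) {Δ Δ' : Finset V}
    (hΔ : Δ ∈ K.faces) (hΔ' : Δ' ∈ K.faces) :
    pervStarP K w Δ ∩ pervStarP K w Δ' =
      ⋃ Δ'' ∈ {Δ'' | Δ'' ∈ K.faces ∧ lamGE K w Δ Δ'' ∧ lamGE K w Δ' Δ''},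
        pervStarP K w Δ'' := by
  ext x
  simp only [Set.mem_inter_iff, Set.mem_iUnion, Set.mem_setOf_eq]
  constructor
  · rintro ⟨⟨Δ₁, h1, hx1⟩, ⟨Δ₂, h2, hx2⟩⟩
    obtain rfl : Δ₁ = Δ₂ := openSimplex_unique hx1 hx2
    exact ⟨Δ₁, ⟨lamGE_mem h1 hΔ, h1, h2⟩, Δ₁, Relation.ReflTransGen.refl, hx1⟩
  · rintro ⟨Δ₃, ⟨_, h1, h2⟩, hx⟩
    exact ⟨pervStarP_mono h1 hx, pervStarP_mono h2 hx⟩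

/-- Lemma 2.3.3: for a finite connected simplicial complex `X` and a cellular
perversity `δ`, the family `B(X,δ)` of perverse stars covers `X` and is a base for a
topology on `X`, and for any two simplices `Δ`, `Δ'` one has
`U(Δ,δ) ∩ U(Δ',δ) = ⋃ {U(Δ'',δ) : Δ'' ≤ Δ and Δ'' ≤ Δ'}`. -/
theorem statement3 {V : Type} [Fintype V] [DecidableEq V]
    (K : SComplex V) (hne : K.faces.Nonempty) (hconn : K.Connected)
    (P : CellPerversity) (w : Finset V → ℤ) (hw : w = fun Δ => P.d (dime Δ)) :
    (⋃₀ pervBaseP K w = Set.univ) ∧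
    TopologicalSpace.IsTopologicalBasis (pervBaseP K w) ∧
    (∀ Δ ∈ K.faces, ∀ Δ' ∈ K.faces,
      pervStarP K w Δ ∩ pervStarP K w Δ' =
        ⋃ Δ'' ∈ {Δ'' | Δ'' ∈ K.faces ∧ lamGE K w Δ Δ'' ∧ lamGE K w Δ' Δ''},
          pervStarP K w Δ'') := by
  have hcover : ⋃₀ pervBaseP K w = Set.univ := by
    ext x
    simp only [Set.mem_sUnion, Set.mem_univ, iff_true]
    obtain ⟨_, ⟨Δ, rfl⟩, hx⟩ := x.2
    obtain ⟨hΔ, hx⟩ : Δ ∈ K.faces ∧ x.1 ∈ openSimplex Δ := by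
      simpa using hx
    exact ⟨pervStarP K w Δ, ⟨Δ, hΔ, rfl⟩, Δ, Relation.ReflTransGen.refl, hx⟩
  refine ⟨hcover, ⟨?_, hcover, rfl⟩, fun Δ hΔ Δ' hΔ' => pervStar_inter K w hΔ hΔ'⟩
  rintro t₁ ⟨Δ, hΔ, rfl⟩ t₂ ⟨Δ', hΔ', rfl⟩ x hx
  have hx' := hx
  rw [pervStar_inter K w hΔ hΔ'] at hx'
  simp only [Set.mem_iUnion, Set.mem_setOf_eq] at hx'
  obtain ⟨Δ₃, ⟨h3, h1, h2⟩, hx3⟩ := hx'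
  refine ⟨pervStarP K w Δ₃, ⟨Δ₃, h3, rfl⟩, hx3, ?_⟩
  intro y hy
  exact ⟨pervStarP_mono h1 hy, pervStarP_mono h2 hy⟩
end

section
/- The assignment p ↦ δ_p, where δ_p(0) = 0 and for k ≥ 1, δ_p(k) = −p(k) if k is of type * (i.e. p(k) = p(k−1) − 1) and δ_p(k) = p*(k) = −p(k) − k if k is of type ! (i.e. p(k) = p(k−1)), is a one-to-one correspondence between the set of BBDG perversities and the set of cellular perversities (Lemma 1.1.6). -/
/-- `d : ℕ → ℤ` is a cellular perversity: `d 0 = 0` and each value `d k`, `k ≥ 1`, is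
either one more than the maximum, or one less than the minimum, of the preceding values
(equivalently, `d` maps every interval `{0,…,k}` bijectively onto an integer interval
`{a,…,a+k}` with `a ≤ 0`). -/
def IsCellular (d : ℕ → ℤ) : Prop :=
  d 0 = 0 ∧ ∀ k : ℕ, 1 ≤ k →
    ((∀ i < k, d i < d k) ∧ (∃ i < k, d k = d i + 1)) ∨
    ((∀ i < k, d k < d i) ∧ (∃ i < k, d k = d i - 1))

/-- `p : ℕ → ℤ` is a BBDG perversity: `p 0 = 0` and `0 ≤ p m − p n ≤ n − m` for `m ≤ n`
(in particular `p` takes non-positive values). -/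
def IsBBDG (p : ℕ → ℤ) : Prop :=
  p 0 = 0 ∧ ∀ m n : ℕ, m ≤ n → 0 ≤ p m - p n ∧ p m - p n ≤ (n : ℤ) - m

/-- `k ≥ 1` is of type `*` for `p` when `p k = p (k−1) − 1`, and of type `!` when
`p k = p (k−1)`.  The cellular perversity associated with a BBDG perversity `p`:
`δ_p(0) = 0`, `δ_p(k) = −p(k)` if `k` is of type `*`, and
`δ_p(k) = p*(k) = −p(k) − k` if `k` is of type `!`. -/
def toCell (p : ℕ → ℤ) : ℕ → ℤ :=
  fun k => if k = 0 then 0 else if p k = p (k - 1) - 1 then -p k else -p k - k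

lemma toCell_zero (p : ℕ → ℤ) : toCell p 0 = 0 := by simp [toCell]

lemma toCell_succ (p : ℕ → ℤ) (j : ℕ) :
    toCell p (j+1) = if p (j+1) = p j - 1 then -p (j+1) else -p (j+1) - (j+1) := by
  simp [toCell]

lemma bbdg_step (p : ℕ → ℤ) (hp : IsBBDG p) (k : ℕ) :
    p (k+1) = p k - 1 ∨ p (k+1) = p k := by
  have h := hp.2 k (k+1) (by omega)
  push_cast at h; omega

lemma bbdg_range (p : ℕ → ℤ) (hp : IsBBDG p) (k : ℕ) :
    0 ≤ -p k ∧ -p k ≤ k := by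
  have h := hp.2 0 k (Nat.zero_le _)
  rw [hp.1] at h; push_cast at h; omega

lemma bbdgInv (p : ℕ → ℤ) (hp : IsBBDG p) (k : ℕ) :
    (∀ j ≤ k, -p k - k ≤ toCell p j ∧ toCell p j ≤ -p k) ∧
    (∀ v : ℤ, -p k - k ≤ v → v ≤ -p k → ∃ j ≤ k, toCell p j = v) := by
  induction k with
  | zero =>
    constructor
    · intro j hj
      have : j = 0 := by omega
      subst this
      rw [toCell_zero, hp.1]
      norm_num
    · intro v h1 h2
      rw [hp.1] at h1 h2
      refine ⟨0, le_rfl, ?_⟩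
      rw [toCell_zero]
      push_cast at h1 h2
      omega
  | succ k ih =>
    obtain ⟨ihb, ihs⟩ := ih
    rcases bbdg_step p hp k with hc | hc
    · have hδ : toCell p (k+1) = -p k + 1 := by
        rw [toCell_succ, if_pos hc]; omega
      constructor
      · intro j hj
        rcases Nat.lt_or_ge j (k+1) with h | h
        · have hb := ihb j (by omega)
          push_cast
          omega
        · have : j = k+1 := by omega
          subst this
          rw [hδ]; push_cast; omega
      · intro v h1 h2
        rcases le_or_gt v (-p k) with h | h
        · push_cast at h1
          obtain ⟨j, hj, hv⟩ := ihs v (by push_cast; omega) h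
          exact ⟨j, by omega, hv⟩
        · refine ⟨k+1, le_rfl, ?_⟩
          rw [hδ]
          push_cast at h2
          omega
    · have hδ : toCell p (k+1) = -p k - (k+1) := by
        rw [toCell_succ, if_neg (by omega)]; push_cast; omega
      constructor
      · intro j hj
        rcases Nat.lt_or_ge j (k+1) with h | h
        · have hb := ihb j (by omega)
          push_cast
          omega
        · have : j = k+1 := by omega
          subst this
          rw [hδ]; push_cast; omega
      · intro v h1 h2
        rcases le_or_gt (-p k - k) v with h | h
        · obtain ⟨j, hj, hv⟩ := ihs v h (by omega)
          exact ⟨j, by omega, hv⟩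
        · refine ⟨k+1, le_rfl, ?_⟩
          rw [hδ]
          push_cast at h1
          omega

lemma toCell_cellular (p : ℕ → ℤ) (hp : IsBBDG p) : IsCellular (toCell p) := by
  refine ⟨toCell_zero p, ?_⟩
  intro k hk
  obtain ⟨j, rfl⟩ : ∃ j, k = j+1 := ⟨k-1, by omega⟩
  obtain ⟨ihb, ihs⟩ := bbdgInv p hp j
  rcases bbdg_step p hp j with hc | hc
  · left
    have hδ : toCell p (j+1) = -p j + 1 := by
      rw [toCell_succ, if_pos hc]; omega
    constructor
    · intro i hi
      have hb := ihb i (by omega)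
      rw [hδ]; omega
    · obtain ⟨i, hi, hv⟩ := ihs (-p j) (by push_cast; omega) le_rfl
      exact ⟨i, by omega, by rw [hδ, hv]⟩
  · right
    have hδ : toCell p (j+1) = -p j - (j+1) := by
      rw [toCell_succ, if_neg (by omega)]; push_cast; omega
    constructor
    · intro i hi
      have hb := ihb i (by omega)
      rw [hδ]; push_cast; omega
    · obtain ⟨i, hi, hv⟩ := ihs (-p j - j) le_rfl (by omega)
      refine ⟨i, by omega, ?_⟩
      rw [hδ, hv]; push_cast; ring

lemma toCell_sign (p : ℕ → ℤ) (hp : IsBBDG p) (j : ℕ) :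
    (p (j+1) = p j - 1 → 0 < toCell p (j+1)) ∧
    (p (j+1) = p j → toCell p (j+1) < 0) := by
  have hr := bbdg_range p hp j
  constructor
  · intro hc
    rw [toCell_succ, if_pos hc]; omega
  · intro hc
    have : ¬ (p (j+1) = p j - 1) := by omega
    rw [toCell_succ, if_neg this]; push_cast; omega

-- surjectivity machinery
def Mx (d : ℕ → ℤ) (k : ℕ) : ℤ := if 0 < d k then d k else d k + k

def CInv (d : ℕ → ℤ) (k : ℕ) : Prop :=
  (∀ i ≤ k, Mx d k - k ≤ d i ∧ d i ≤ Mx d k) ∧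
  (∃ i ≤ k, d i = Mx d k) ∧ (∃ i ≤ k, d i = Mx d k - k)

lemma stepAux (d : ℕ → ℤ) (hd : IsCellular d) (k : ℕ) (h : CInv d k) :
    (d (k+1) = Mx d k + 1 ∧ Mx d (k+1) = Mx d k + 1) ∨
    (d (k+1) = Mx d k - (k+1) ∧ Mx d (k+1) = Mx d k) := by
  obtain ⟨hb, ⟨iM, hiM, hM⟩, ⟨im, him, hm⟩⟩ := h
  have h0 := hd.1
  have hb0 := hb 0 (Nat.zero_le _)
  rw [h0] at hb0
  rcases hd.2 (k+1) (by omega) with ⟨hlt, i0, hi0, he⟩ | ⟨hlt, i0, hi0, he⟩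
  · left
    have h2 := hb i0 (by omega)
    have h3 := hlt iM (by omega)
    have h1 : d (k+1) = Mx d k + 1 := by omega
    have h4 : Mx d (k+1) = d (k+1) := by rw [Mx, if_pos (by omega)]
    exact ⟨h1, by omega⟩
  · right
    have h2 := hb i0 (by omega)
    have h3 := hlt im (by omega)
    have h1 : d (k+1) = Mx d k - (k+1) := by push_cast; omega
    have h4 : Mx d (k+1) = d (k+1) + (k+1) := by
      rw [Mx, if_neg (by push_cast; omega)]
      push_cast; ring
    refine ⟨h1, ?_⟩
    rw [h4, h1]
    push_cast; ring
  
lemma cellInv (d : ℕ → ℤ) (hd : IsCellular d) (k : ℕ) : CInv d k := by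
  induction k with
  | zero =>
    have h0 : Mx d 0 = 0 := by simp [Mx, hd.1]
    refine ⟨?_, ⟨0, le_rfl, ?_⟩, ⟨0, le_rfl, ?_⟩⟩
    · intro i hi
      have : i = 0 := by omega
      subst this
      rw [hd.1, h0]; norm_num
    · rw [hd.1, h0]
    · rw [hd.1, h0]; norm_num
  | succ k ih =>
    obtain ⟨hb, ⟨iM, hiM, hM⟩, ⟨im, him, hm⟩⟩ := ih
    rcases stepAux d hd k ⟨hb, ⟨iM, hiM, hM⟩, ⟨im, him, hm⟩⟩ with ⟨h1, h2⟩ | ⟨h1, h2⟩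
    · refine ⟨?_, ⟨k+1, le_rfl, by omega⟩, ⟨im, by omega, ?_⟩⟩
      · intro i hi
        rcases Nat.lt_or_ge i (k+1) with h | h
        · have := hb i (by omega)
          push_cast; omega
        · have : i = k+1 := by omega
          subst this
          push_cast; omega
      · push_cast; omega
    · refine ⟨?_, ⟨iM, by omega, by omega⟩, ⟨k+1, le_rfl, ?_⟩⟩
      · intro i hi
        rcases Nat.lt_or_ge i (k+1) with h | h
        · have := hb i (by omega)
          push_cast; omega
        · have : i = k+1 := by omega
          subst this
          push_cast; omega
      · push_cast; omega

lemma bbdg_of_step (p : ℕ → ℤ) (h0 : p 0 = 0)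
    (h : ∀ k, p (k+1) = p k - 1 ∨ p (k+1) = p k) : IsBBDG p := by
  refine ⟨h0, ?_⟩
  intro m n hmn
  induction n, hmn using Nat.le_induction with
  | base => omega
  | succ n hmn ih =>
    have := h n
    push_cast at ih ⊢
    omega

/-- Lemma 1.1.6: the assignment `p ↦ δ_p` is a one-to-one correspondence between
the set of BBDG perversities and the set of cellular perversities. -/
theorem statement7 :
    Set.BijOn toCell {p : ℕ → ℤ | IsBBDG p} {d : ℕ → ℤ | IsCellular d} := by
  refine ⟨fun p hp => toCell_cellular p hp, ?_, ?_⟩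
  · intro p hp q hq h
    funext k
    cases k with
    | zero => rw [hp.1, hq.1]
    | succ j =>
      have hk : toCell p (j+1) = toCell q (j+1) := congrFun h (j+1)
      have hsp := toCell_sign p hp j
      have hsq := toCell_sign q hq j
      rcases bbdg_step p hp j with hcp | hcp <;> rcases bbdg_step q hq j with hcq | hcq
      · rw [toCell_succ, if_pos hcp, toCell_succ, if_pos hcq] at hk
        omega
      · have := hsp.1 hcp
        have := hsq.2 hcq
        omega
      · have := hsp.2 hcp
        have := hsq.1 hcq
        omega
      · rw [toCell_succ, if_neg (by omega), toCell_succ, if_neg (by omega)] at hk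
        omega
  · intro d hd
    refine ⟨fun k => -(Mx d k), ?_, ?_⟩
    · simp only [Set.mem_setOf_eq]
      apply bbdg_of_step
      · simp [Mx, hd.1]
      · intro k
        rcases stepAux d hd k (cellInv d hd k) with ⟨h1, h2⟩ | ⟨h1, h2⟩
        · left; omega
        · right; omega
    · funext k
      cases k with
      | zero => rw [toCell_zero, hd.1]
      | succ j =>
        rcases stepAux d hd j (cellInv d hd j) with ⟨h1, h2⟩ | ⟨h1, h2⟩
        · rw [toCell_succ, if_pos (by omega)]
          omega
        · rw [toCell_succ, if_neg (by omega)]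
          push_cast; omega
end

section
/- Let X be a finite connected simplicial complex, F a field of characteristic 0, and T a presheaf on Λ(X). For any point x in an open simplex Δ and any 0 < ε ≤ 1, the map φ ↦ φ(Δ) is an isomorphism from the vector space of T-constructible functions on the ε-neighborhood Δ*(x,ε) onto T(Δ). Moreover, if Δ₁*(x,ε₁) ⊇ Δ₂*(y,ε₂), then the map given by restriction of functions, from the space of T-constructible functions on Δ₁*(x,ε₁) to the space of T-constructible functions on Δ₂*(y,ε₂), corresponds under these isomorphisms precisely to t(Δ₁,Δ₂) : T(Δ₁) → T(Δ₂) (Lemma 2.2.3). -/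
open Opposite

namespace SComplex

variable {V : Type} [Fintype V] [DecidableEq V]

def Sim (K : SComplex V) : Type := {Δ : Finset V // Δ ∈ K.faces}

instance (K : SComplex V) : DecidableEq (Sim K) := Subtype.instDecidableEq

/-- The open star of `Δ` inside the realization: the points of the realization all of
whose `Δ`-coordinates are positive. -/
def starA (K : SComplex V) (Δ : Finset V) : Set (V → ℝ) :=
  {y | y ∈ space K ∧ ∀ v ∈ Δ, 0 < y v}

/-- The `ε`-neighborhood `Δ*(x,ε) = {ε y + (1−ε) x : y ∈ Δ*}` of a point `x ∈ Δ`. -/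
def nbhd (K : SComplex V) (x : V → ℝ) (Δ : Finset V) (ε : ℝ) : Set (V → ℝ) :=
  {z | ∃ y ∈ starA K Δ, z = fun v => ε * y v + (1 - ε) * x v}

variable (F : Type) [Field F] [CharZero F]

/-- A presheaf `T` on the poset `Λ(X)` with values in finite-dimensional `F`-vector
spaces: a stalk `T(Δ)` for every simplex and a functorial family of restriction maps
`t(Δ,Δ') : T(Δ) → T(Δ')` for `Δ ≥ Δ'` (i.e. for `Δ` a face of `Δ'`). -/
structure PreL (K : SComplex V) where
  T : Sim K → Type
  [acg : ∀ Δ, AddCommGroup (T Δ)]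
  [mods : ∀ Δ, Module F (T Δ)]
  fd : ∀ Δ, FiniteDimensional F (T Δ)
  res : ∀ Δ Δ' : Sim K, Δ.1 ⊆ Δ'.1 → (T Δ →ₗ[F] T Δ')
  res_refl : ∀ Δ h, res Δ Δ h = LinearMap.id
  res_comp : ∀ (Δ Δ' Δ'' : Sim K) (h : Δ.1 ⊆ Δ'.1) (h' : Δ'.1 ⊆ Δ''.1),
    (res Δ' Δ'' h').comp (res Δ Δ' h) = res Δ Δ'' (h.trans h')

attribute [instance] PreL.acg PreL.mods

variable {F}

/-- A function `φ` on `A`, with values in `⊕_Δ T(Δ)`, is `T`-constructible relative to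
the simplex `Δ` (of the center): `φ` is constant on each piece `Δ' ∩ A` (where `Δ` is a
face of `Δ'`) with value `φ(Δ') ∈ T(Δ')`, and `φ(Δ'') = t(Δ',Δ'')(φ(Δ'))` whenever
`Δ'' ≤ Δ' ≤ Δ` in `Λ(X)`. -/
def ConstructibleOn {K : SComplex V} (X : PreL F K) (A : Set (V → ℝ)) (Δ : Sim K)
    (φ : {z : V → ℝ // z ∈ A} → (∀ Δ₀ : Sim K, X.T Δ₀)) : Prop :=
  ∃ v : ∀ Δ' : Sim K, Δ.1 ⊆ Δ'.1 → X.T Δ',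
    (∀ (Δ' : Sim K) (h : Δ.1 ⊆ Δ'.1) (z : {z : V → ℝ // z ∈ A}),
      z.1 ∈ openSimplex Δ'.1 → φ z = Pi.single Δ' (v Δ' h)) ∧
    (∀ (Δ' Δ'' : Sim K) (h' : Δ.1 ⊆ Δ'.1) (h'' : Δ.1 ⊆ Δ''.1) (hsub : Δ'.1 ⊆ Δ''.1),
      v Δ'' h'' = X.res Δ' Δ'' hsub (v Δ' h'))

/-- The vector space of `T`-constructible functions on `A`. -/
def ConstrSub {K : SComplex V} (X : PreL F K) (A : Set (V → ℝ)) (Δ : Sim K) :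
    Submodule F ({z : V → ℝ // z ∈ A} → (∀ Δ₀ : Sim K, X.T Δ₀)) where
  carrier := {φ | ConstructibleOn X A Δ φ}
  add_mem' := by
    rintro φ ψ ⟨v, hv1, hv2⟩ ⟨u, hu1, hu2⟩
    refine ⟨fun Δ' h => v Δ' h + u Δ' h, ?_, ?_⟩
    · intro Δ' h z hz
      simp only [Pi.add_apply, hv1 Δ' h z hz, hu1 Δ' h z hz, Pi.single_add]
    · intro Δ' Δ'' h' h'' hsub
      rw [map_add, ← hv2 Δ' Δ'' h' h'' hsub, ← hu2 Δ' Δ'' h' h'' hsub]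
  zero_mem' := by
    refine ⟨fun Δ' h => 0, ?_, ?_⟩
    · intro Δ' h z hz
      simp
    · intro Δ' Δ'' h' h'' hsub
      simp
  smul_mem' := by
    rintro c φ ⟨v, hv1, hv2⟩
    refine ⟨fun Δ' h => c • v Δ' h, ?_, ?_⟩
    · intro Δ' h z hz
      simp only [Pi.smul_apply, hv1 Δ' h z hz, Pi.single_smul]
    · intro Δ' Δ'' h' h'' hsub
      rw [map_smul, ← hv2 Δ' Δ'' h' h'' hsub]

/-- The center `x` belongs to its own `ε`-neighborhood. -/
lemma center_mem_nbhd (K : SComplex V) {x : V → ℝ} {Δ : Finset V} (hΔ : Δ ∈ K.faces)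
    (hx : x ∈ openSimplex Δ) {ε : ℝ} (hε0 : 0 < ε) (hε1 : ε ≤ 1) :
    x ∈ nbhd K x Δ ε := by
  refine ⟨x, ⟨Set.mem_biUnion hΔ hx, fun v hv => hx.1 v hv⟩, ?_⟩
  funext v
  ring

/-- Evaluation of a constructible function at the center: `φ ↦ φ(Δ)`. -/
def evalAt {K : SComplex V} (X : PreL F K) {A : Set (V → ℝ)} (Δ : Sim K)
    {x : V → ℝ} (hx : x ∈ A) : ConstrSub X A Δ →ₗ[F] X.T Δ where
  toFun φ := φ.1 ⟨x, hx⟩ Δ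
  map_add' φ ψ := rfl
  map_smul' c φ := rfl

end SComplex

open SComplex

lemma openSimplex_nonneg' {V : Type} [Fintype V] [DecidableEq V] {Δ : Finset V}
    {x : V → ℝ} (hx : x ∈ openSimplex Δ) (v : V) : 0 ≤ x v := by
  by_cases h : v ∈ Δ
  · exact (hx.1 v h).le
  · rw [hx.2.1 v h]

lemma openSimplex_eq' {V : Type} [Fintype V] [DecidableEq V] {A B : Finset V}
    {z : V → ℝ} (hA : z ∈ openSimplex A) (hB : z ∈ openSimplex B) : A = B := by
  ext v
  constructor
  · intro h
    by_contra hB'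
    exact absurd (hB.2.1 v hB') (ne_of_gt (hA.1 v h))
  · intro h
    by_contra hA'
    exact absurd (hA.2.1 v hA') (ne_of_gt (hB.1 v h))

lemma mem_nbhd_open' {V : Type} [Fintype V] [DecidableEq V] {K : SComplex V}
    {Δ : Finset V} {x : V → ℝ} (hx : x ∈ openSimplex Δ) {ε : ℝ} (hε0 : 0 < ε)
    (hε1 : ε ≤ 1) {z : V → ℝ} (hz : z ∈ nbhd K x Δ ε) :
    ∃ Δ'' ∈ K.faces, Δ ⊆ Δ'' ∧ z ∈ openSimplex Δ'' := by
  obtain ⟨y, ⟨hy_space, hy_pos⟩, rfl⟩ := hz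
  obtain ⟨Δ'', hΔ''f, hyΔ''⟩ := Set.mem_iUnion₂.1 hy_space
  have hsub : Δ ⊆ Δ'' := by
    intro v hv
    by_contra hv'
    exact absurd (hyΔ''.2.1 v hv') (ne_of_gt (hy_pos v hv))
  refine ⟨Δ'', hΔ''f, hsub, ?_, ?_, ?_⟩
  · intro v hv
    dsimp only
    have h1 : 0 < ε * y v := mul_pos hε0 (hyΔ''.1 v hv)
    have h2 : 0 ≤ (1 - ε) * x v :=
      mul_nonneg (by linarith) (openSimplex_nonneg' hx v)
    linarith
  · intro v hv
    dsimp only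
    rw [hyΔ''.2.1 v hv, hx.2.1 v (fun h => hv (hsub h))]
    ring
  · dsimp only
    have hxsum : ∑ v ∈ Δ'', x v = 1 := by
      rw [← hx.2.2]
      exact (Finset.sum_subset hsub (fun v _ hv => hx.2.1 v hv)).symm
    rw [Finset.sum_add_distrib, ← Finset.mul_sum, ← Finset.mul_sum,
      hyΔ''.2.2, hxsum]
    ring

lemma single_res_congr {V : Type} [Fintype V] [DecidableEq V] {F : Type}
    [Field F] [CharZero F] {K : SComplex V} (X : PreL F K) {Δ₁ : Sim K}
    (t : X.T Δ₁) (A B : Sim K) (hAB : A = B) (hA : Δ₁.1 ⊆ A.1) (hB : Δ₁.1 ⊆ B.1) :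
    Pi.single A (X.res Δ₁ A hA t) = Pi.single B (X.res Δ₁ B hB t) := by
  subst hAB; rfl

lemma constructible_value {V : Type} [Fintype V] [DecidableEq V] {F : Type}
    [Field F] [CharZero F] {K : SComplex V} {X : PreL F K} {Δ₁ : Sim K}
    {x : V → ℝ} (hx : x ∈ openSimplex Δ₁.1) {ε₁ : ℝ} (hε₁0 : 0 < ε₁)
    (hε₁1 : ε₁ ≤ 1) {φ : {z : V → ℝ // z ∈ nbhd K x Δ₁.1 ε₁} → (∀ Δ₀ : Sim K, X.T Δ₀)}
    (hφ : ConstructibleOn X (nbhd K x Δ₁.1 ε₁) Δ₁ φ) :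
    ∀ z : {z : V → ℝ // z ∈ nbhd K x Δ₁.1 ε₁}, ∃ (Δ' : Sim K) (h : Δ₁.1 ⊆ Δ'.1),
      z.1 ∈ openSimplex Δ'.1 ∧
      φ z = Pi.single Δ' (X.res Δ₁ Δ' h
        ((φ ⟨x, center_mem_nbhd K Δ₁.2 hx hε₁0 hε₁1⟩) Δ₁)) := by
  obtain ⟨v, hv1, hv2⟩ := hφ
  have hxval : (φ ⟨x, center_mem_nbhd K Δ₁.2 hx hε₁0 hε₁1⟩) Δ₁ =
      v Δ₁ (subset_refl _) := by
    rw [hv1 Δ₁ (subset_refl _) _ hx]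
    simp
  intro z
  obtain ⟨Δ'', hΔ''f, hsub, hzΔ''⟩ := mem_nbhd_open' hx hε₁0 hε₁1 z.2
  refine ⟨⟨Δ'', hΔ''f⟩, hsub, hzΔ'', ?_⟩
  rw [hv1 ⟨Δ'', hΔ''f⟩ hsub z hzΔ'', hxval,
    ← hv2 Δ₁ ⟨Δ'', hΔ''f⟩ (subset_refl _) hsub hsub]

/-- Lemma 2.2.3: for a point `x` in the open simplex `Δ` and `0 < ε ≤ 1`, the map
`φ ↦ φ(Δ)` is a linear isomorphism from the space of `T`-constructible functions on
the `ε`-neighborhood `Δ*(x,ε)` onto `T(Δ)`; moreover, if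
`Δ₁*(x,ε₁) ⊇ Δ₂*(y,ε₂)`, then restriction of functions corresponds, under these
isomorphisms, to the structure map `t(Δ₁,Δ₂) : T(Δ₁) → T(Δ₂)`. -/
theorem statement11 {V : Type} [Fintype V] [DecidableEq V] (F : Type) [Field F]
    [CharZero F] (K : SComplex V) (hne : K.faces.Nonempty) (hconn : K.Connected)
    (X : PreL F K)
    (Δ₁ : Sim K) (x : V → ℝ) (hx : x ∈ openSimplex Δ₁.1)
    (ε₁ : ℝ) (hε₁0 : 0 < ε₁) (hε₁1 : ε₁ ≤ 1) :
    Function.Bijective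
      (evalAt X Δ₁ (center_mem_nbhd K Δ₁.2 hx hε₁0 hε₁1)) ∧
    ∀ (Δ₂ : Sim K) (y : V → ℝ) (hy : y ∈ openSimplex Δ₂.1)
      (ε₂ : ℝ) (hε₂0 : 0 < ε₂) (hε₂1 : ε₂ ≤ 1)
      (hsub : nbhd K y Δ₂.1 ε₂ ⊆ nbhd K x Δ₁.1 ε₁),
      ∃ h12 : Δ₁.1 ⊆ Δ₂.1,
        ∀ φ : {z : V → ℝ // z ∈ nbhd K x Δ₁.1 ε₁} → (∀ Δ₀ : Sim K, X.T Δ₀),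
          ConstructibleOn X (nbhd K x Δ₁.1 ε₁) Δ₁ φ →
          (ConstructibleOn X (nbhd K y Δ₂.1 ε₂) Δ₂
              (fun z => φ ⟨z.1, hsub z.2⟩) ∧
            (φ ⟨y, hsub (center_mem_nbhd K Δ₂.2 hy hε₂0 hε₂1)⟩) Δ₂ =
              X.res Δ₁ Δ₂ h12 ((φ ⟨x, center_mem_nbhd K Δ₁.2 hx hε₁0 hε₁1⟩) Δ₁)) := by
  constructor
  · constructor
    · -- injectivity
      intro φ ψ h
      have h' : φ.1 ⟨x, center_mem_nbhd K Δ₁.2 hx hε₁0 hε₁1⟩ Δ₁ =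
          ψ.1 ⟨x, center_mem_nbhd K Δ₁.2 hx hε₁0 hε₁1⟩ Δ₁ := h
      apply Subtype.ext
      funext z
      obtain ⟨Δ', hΔ', hz, hφz⟩ := constructible_value hx hε₁0 hε₁1 φ.2 z
      obtain ⟨Δ'2, hΔ'2, hz2, hψz⟩ := constructible_value hx hε₁0 hε₁1 ψ.2 z
      have heq : Δ' = Δ'2 := Subtype.ext (openSimplex_eq' hz hz2)
      subst heq
      rw [hφz, hψz, h']
    · -- surjectivity
      intro t
      choose f hf using (fun z : {z : V → ℝ // z ∈ nbhd K x Δ₁.1 ε₁} =>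
        mem_nbhd_open' hx hε₁0 hε₁1 z.2)
      set g : {z : V → ℝ // z ∈ nbhd K x Δ₁.1 ε₁} → Sim K :=
        fun z => ⟨f z, (hf z).1⟩ with hg
      refine ⟨⟨fun z => Pi.single (g z) (X.res Δ₁ (g z) (hf z).2.1 t), ?_⟩, ?_⟩
      · refine ⟨fun Δ' h => X.res Δ₁ Δ' h t, ?_, ?_⟩
        · intro Δ' h z hz
          have heq : g z = Δ' := Subtype.ext (openSimplex_eq' (hf z).2.2 hz)
          exact single_res_congr X t (g z) Δ' heq (hf z).2.1 h
        · intro Δ' Δ'' h' h'' hsub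
          rw [← LinearMap.comp_apply, X.res_comp]
      · show Pi.single (g ⟨x, _⟩) _ Δ₁ = t
        have heq : g ⟨x, center_mem_nbhd K Δ₁.2 hx hε₁0 hε₁1⟩ = Δ₁ :=
          Subtype.ext (openSimplex_eq'
            (hf ⟨x, center_mem_nbhd K Δ₁.2 hx hε₁0 hε₁1⟩).2.2 hx)
        rw [single_res_congr X t _ Δ₁ heq _ (subset_refl _)]
        simp [X.res_refl]
  · intro Δ₂ y hy ε₂ hε₂0 hε₂1 hsub
    have hy' : y ∈ nbhd K x Δ₁.1 ε₁ :=
      hsub (center_mem_nbhd K Δ₂.2 hy hε₂0 hε₂1)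
    obtain ⟨Δ'', hΔ''f, hs, hz⟩ := mem_nbhd_open' hx hε₁0 hε₁1 hy'
    have hΔeq : Δ'' = Δ₂.1 := openSimplex_eq' hz hy
    have h12 : Δ₁.1 ⊆ Δ₂.1 := hΔeq ▸ hs
    refine ⟨h12, ?_⟩
    intro φ hφ
    obtain ⟨v, hv1, hv2⟩ := hφ
    constructor
    · refine ⟨fun Δ' h => v Δ' (h12.trans h), ?_, ?_⟩
      · intro Δ' h z hz'
        exact hv1 Δ' (h12.trans h) ⟨z.1, hsub z.2⟩ hz'
      · intro Δ' Δ'' h' h'' hs'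
        exact hv2 Δ' Δ'' (h12.trans h') (h12.trans h'') hs'
    · obtain ⟨Δ', h', hzy, hval⟩ := constructible_value hx hε₁0 hε₁1
        ⟨v, hv1, hv2⟩ ⟨y, hsub (center_mem_nbhd K Δ₂.2 hy hε₂0 hε₂1)⟩
      have heq : Δ' = Δ₂ := Subtype.ext (openSimplex_eq' hzy hy)
      subst heq
      rw [hval]
      simp
end

section
/- Let X be a finite connected simplicial complex, F a field of characteristic 0, and δ a cellular perversity. For every simplex Δ of X and every finite-dimensional F-vector space V, the global sections of the injective object [^δΔ]^V of R(X,−δ) satisfy Γ(X; [^δΔ]^V) = Hom_{R(X,−δ)}(𝐅, [^δΔ]^V) ≅ V, where 𝐅 is the constant object (Lemma 3.3.3). -/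
open CategoryTheory

namespace SComplex

variable {V : Type} [Fintype V] [DecidableEq V]

variable (F : Type) [Field F] [CharZero F]

/-- An object of the category `R(X,w)` of linear algebra data. -/
structure RObj (K : SComplex V) (w : Finset V → ℤ) where
  stalk : Sim K → ModuleCat F
  fd : ∀ Δ, Module.Finite F (stalk Δ)
  map : ∀ Δ Δ' : Sim K, Incident Δ.1 Δ'.1 → w Δ.1 = w Δ'.1 + 1 → (stalk Δ ⟶ stalk Δ')
  equivAxiom : ∀ (Δ' Δ₁ Δ₂ Δ'' : Sim K)
    (h1 : Incident Δ'.1 Δ₁.1) (e1 : w Δ'.1 = w Δ₁.1 + 1)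
    (h2 : Incident Δ₁.1 Δ''.1) (e2 : w Δ₁.1 = w Δ''.1 + 1)
    (h3 : Incident Δ'.1 Δ₂.1) (e3 : w Δ'.1 = w Δ₂.1 + 1)
    (h4 : Incident Δ₂.1 Δ''.1) (e4 : w Δ₂.1 = w Δ''.1 + 1),
    map Δ' Δ₁ h1 e1 ≫ map Δ₁ Δ'' h2 e2 = map Δ' Δ₂ h3 e3 ≫ map Δ₂ Δ'' h4 e4

variable {F}

variable {K : SComplex V}

/-- The "constant sheaf" `𝐅` in `R(X,−δ)`: stalk `F` everywhere, all structure maps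
the identity. -/
def constR (K : SComplex V) (w : Finset V → ℤ) : RObj F K w where
  stalk _ := ModuleCat.of F F
  fd _ := inferInstance
  map _ _ _ _ := ModuleCat.ofHom LinearMap.id
  equivAxiom := by intros; rfl

section Coideal

variable (K) (P : Finset V → ℤ)

/-- The object `[^δΔ]^V` of `R(X,−δ)`: stalk `V` at every simplex `Δ' ≤ Δ` in
`Λ(X,δ)` and `0` elsewhere, with all maps between copies of `V` the identity.
(The stalk at `Δ'` is realized as the space of functions from the proposition
`Δ' ≤ Δ in Λ(X,δ)` to `V`.) -/
noncomputable def coideal (Δ : Sim K) (W : Type) [AddCommGroup W] [Module F W]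
    [FiniteDimensional F W] : RObj F K (fun Δ₀ => -(P Δ₀)) where
  stalk Δ' := ModuleCat.of F (PLift (lamGE K P Δ.1 Δ'.1) → W)
  fd Δ' := by
    by_cases h : lamGE K P Δ.1 Δ'.1
    · haveI : Unique (PLift (lamGE K P Δ.1 Δ'.1)) := ⟨⟨⟨h⟩⟩, fun _ => rfl⟩
      exact Module.Finite.equiv
        (LinearEquiv.funUnique (PLift (lamGE K P Δ.1 Δ'.1)) F W).symm
    · haveI : IsEmpty (PLift (lamGE K P Δ.1 Δ'.1)) := ⟨fun x => h x.down⟩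
      infer_instance
  map α β hi hw :=
    ModuleCat.ofHom
    { toFun := fun f hβ => f ⟨Relation.ReflTransGen.tail hβ.down
        ⟨β.2, α.2, (by rcases hi with h | h; exact Or.inr h; exact Or.inl h),
          by omega⟩⟩
      map_add' := fun _ _ => rfl
      map_smul' := fun _ _ => rfl }
  equivAxiom := by intros; rfl

end Coideal

/-- The space of global sections `Γ(X;S) = Hom_{R(X,−δ)}(𝐅,S)`: the stalkwise linear
maps from the constant object commuting with the structure maps. -/
def GammaSub {w : Finset V → ℤ} (S : RObj F K w) :
    Submodule F (∀ Δ : Sim K, ((constR K w : RObj F K w).stalk Δ →ₗ[F] S.stalk Δ)) where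
  carrier := {h | ∀ (Δ Δ' : Sim K) (hi : Incident Δ.1 Δ'.1) (hw : w Δ.1 = w Δ'.1 + 1),
    (h Δ').comp ((constR K w : RObj F K w).map Δ Δ' hi hw).hom =
      (S.map Δ Δ' hi hw).hom.comp (h Δ)}
  add_mem' := by
    intro a b ha hb Δ Δ' hi hw
    simp only [Pi.add_apply, LinearMap.add_comp, LinearMap.comp_add]
    rw [ha Δ Δ' hi hw, hb Δ Δ' hi hw]
  zero_mem' := by
    intro Δ Δ' hi hw
    simp
  smul_mem' := by
    intro c a ha Δ Δ' hi hw
    simp only [Pi.smul_apply, LinearMap.smul_comp, LinearMap.comp_smul]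
    rw [ha Δ Δ' hi hw]

end SComplex

open SComplex

def pd {V : Type} [Fintype V] [DecidableEq V] (P : CellPerversity) (Δ : Finset V) : ℤ :=
  P.d (dime Δ)

/-! A global section `g` of `[^δΔ]^W` is a compatible family of linear maps
`F → (Δ' ≤ Δ → W)`. Compatibility along each step of a chain `Δ ≥ ⋯ ≥ Δ'` in `Λ(X,δ)` forces
every value of `g` to be a multiple of `g_Δ(1) ∈ W`; conversely each `v ∈ W` spreads to the
section that is `x ↦ x • v` on every stalk. -/

namespace SComplex

variable {V : Type} [Fintype V] [DecidableEq V] {F : Type} [Field F] {K : SComplex V}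
  {P : Finset V → ℤ} {Δ : Sim K} {W : Type} [AddCommGroup W] [Module F W]
  [FiniteDimensional F W]

theorem coidealSection_apply_one_eq (g : GammaSub (coideal (F := F) K P Δ W)) (Δ' : Sim K)
    (p : lamGE K P Δ.1 Δ'.1) :
    g.1 Δ' (1 : F) ⟨p⟩ = g.1 Δ (1 : F) ⟨.refl⟩ := by
  obtain ⟨b, hb⟩ := Δ'
  change Relation.ReflTransGen (StepRel K P) Δ.1 b at p
  induction p with
  | refl => rfl
  | @tail b c q s ih =>
    have hw : -P c = -P b + 1 := by have := s.2.2.2; omega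
    have hstep := g.2 ⟨c, hb⟩ ⟨b, s.1⟩ s.2.2.1.symm hw
    exact (congrFun (LinearMap.congr_fun hstep (1 : F)) ⟨q⟩).symm.trans (ih s.1)

variable (K P Δ W) in
noncomputable def coidealSectionEval : GammaSub (coideal (F := F) K P Δ W) →ₗ[F] W where
  toFun g := g.1 Δ (1 : F) ⟨.refl⟩
  map_add' _ _ := rfl
  map_smul' _ _ := rfl

theorem coidealSection_apply_eq_smul (g : GammaSub (coideal (F := F) K P Δ W)) (Δ' : Sim K)
    (x : F) (p : PLift (lamGE K P Δ.1 Δ'.1)) :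
    g.1 Δ' x p = x • coidealSectionEval K P Δ W g := by
  calc g.1 Δ' x p = x • g.1 Δ' (1 : F) ⟨p.down⟩ :=
        congrFun ((congrArg (g.1 Δ') (mul_one x).symm).trans ((g.1 Δ').map_smul x (1 : F))) p
    _ = x • coidealSectionEval K P Δ W g := by rw [coidealSection_apply_one_eq]; rfl

variable (K P Δ) in
noncomputable def coidealConstSection (v : W) : GammaSub (coideal (F := F) K P Δ W) :=
  ⟨fun _ => LinearMap.pi fun _ => LinearMap.toSpanSingleton F W v, fun _ _ _ _ => rfl⟩

variable (K P Δ W) in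
noncomputable def coidealSectionEquiv : GammaSub (coideal (F := F) K P Δ W) ≃ₗ[F] W :=
  { coidealSectionEval K P Δ W with
    invFun := coidealConstSection K P Δ
    left_inv := fun g => Subtype.ext <| funext fun Δ' => LinearMap.ext fun x => funext fun p =>
      (coidealSection_apply_eq_smul g Δ' x p).symm
    right_inv := fun v => one_smul F v }

end SComplex

theorem statement16_general {V : Type} [Fintype V] [DecidableEq V] (F : Type) [Field F]
    (K : SComplex V)
    (P : CellPerversity) (Δ : Sim K)
    (W : Type) [AddCommGroup W] [Module F W] [FiniteDimensional F W] :
    Nonempty ((GammaSub (F := F) (K := K)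
        (coideal (F := F) K (fun Δ₀ => pd P Δ₀) Δ W)) ≃ₗ[F] W) :=
  ⟨coidealSectionEquiv K (pd P) Δ W⟩

/-- Lemma 3.3.3: for every simplex `Δ` of `X` and every finite-dimensional vector space
`W`, the global sections `Γ(X; [^δΔ]^W) = Hom_{R(X,−δ)}(𝐅, [^δΔ]^W)` of the injective
object `[^δΔ]^W` of `R(X,−δ)` are isomorphic to `W`. -/
theorem statement16 {V : Type} [Fintype V] [DecidableEq V] (F : Type) [Field F]
    [CharZero F] (K : SComplex V) (hne : K.faces.Nonempty) (hconn : K.Connected)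
    (P : CellPerversity) (Δ : Sim K)
    (W : Type) [AddCommGroup W] [Module F W] [FiniteDimensional F W] :
    Nonempty ((GammaSub (F := F) (K := K)
        (coideal (F := F) K (fun Δ₀ => pd P Δ₀) Δ W)) ≃ₗ[F] W) :=
  statement16_general F K P Δ W
end
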